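/- arXiv:1109.4288 — 3 statements merged into one kernel-verified Lean document; each statement's English description precedes it below -/
import Mathlib

section
/- Cartesian-product enumeration correctness: for a rooted tree pattern where every query node is an output node, the set of full matches rooted at a fixed data vertex v matching the root equals {v} paired with the Cartesian product, over the children u' of the root, of the sets of full matches of the subtrees rooted at u' whose root image is a vertex v' with v ⟶⁺ v'. Formally, defining Matches(u, v) recursively as: if v ⊭ p_u then ∅, else the set of functions assigning to u the value v and to each subtree below a child u' some element of ⋃_{v' : v ⟶⁺ v'} Matches(u', v'), this recursion computes exactly the set of embeddings of the subtree rooted at u that map u to v and respect all AD edge constraints and predicates. -/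
/-- A rooted query tree with vertex predicates. -/
inductive QTree (V : Type) : Type
  | node : (V → Prop) → (n : ℕ) → (Fin n → QTree V) → QTree V

/-- A tree of data vertices of the same shape as a query tree: a full match. -/
inductive VTree (V : Type) : Type
  | node : V → (n : ℕ) → (Fin n → VTree V) → VTree V

def VTree.root {V : Type} : VTree V → V
  | .node v _ _ => v

/-- `Emb reach t m`: m is an embedding of the query tree t — same shape, every node's
vertex satisfies the corresponding predicate, and every tree edge is mapped to a pair
related by `reach` (a nonempty path). -/
inductive Emb {V : Type} (reach : V → V → Prop) : QTree V → VTree V → Prop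
  | node {p : V → Prop} {n : ℕ} {cs : Fin n → QTree V} {v : V} {ms : Fin n → VTree V}
      (hp : p v)
      (hreach : ∀ i : Fin n, reach v (ms i).root)
      (hemb : ∀ i : Fin n, Emb reach (cs i) (ms i)) :
      Emb reach (QTree.node p n cs) (VTree.node v n ms)

/-- Recursive computation of the set of full matches rooted at a fixed vertex v:
empty if v fails the predicate, otherwise v paired with the Cartesian product over the
children of the unions over reachable vertices of the recursively computed match sets. -/
def MatchSet {V : Type} (reach : V → V → Prop) : QTree V → V → Set (VTree V)
  | .node p n cs, v =>
      {m | p v ∧ ∃ ms : Fin n → VTree V, m = VTree.node v n ms ∧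
        ∀ i : Fin n, ∃ v', reach v v' ∧ (ms i).root = v' ∧ ms i ∈ MatchSet reach (cs i) v'}

/-- Cartesian-product enumeration correctness: the recursion computes exactly the set of
embeddings of the subtree rooted at t mapping its root to v. -/
theorem stmt13 {V : Type} (edge : V → V → Prop) (t : QTree V) (v : V) (m : VTree V) :
    m ∈ MatchSet (Relation.TransGen edge) t v ↔
      (Emb (Relation.TransGen edge) t m ∧ m.root = v) := by
  induction t generalizing v m with
  | node p n cs ih =>
    constructor
    · rintro ⟨hp, ms, rfl, h⟩
      refine ⟨Emb.node hp (fun i => ?_) (fun i => ?_), rfl⟩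
      · obtain ⟨v', hr, hroot, _⟩ := h i
        exact hroot ▸ hr
      · obtain ⟨v', hr, hroot, hm⟩ := h i
        exact ((ih i v' (ms i)).mp hm).1
    · rintro ⟨he, hroot⟩
      cases he with
      | node hp hr hemb =>
        cases hroot
        exact ⟨hp, _, rfl, fun i => ⟨_, hr i, rfl, (ih i _ _).mpr ⟨hemb i, rfl⟩⟩⟩
end

section
/- Soundness of the two-phase pruning: let D(u) be the set of vertices downward-matching u, and define U(u) top-down by U(root) = D(root) and, for a child u' of u, U(u') = {v' ∈ D(u') : ∃ v ∈ U(u), v ⟶⁺ v'}. Then a vertex v' belongs to U(u') if and only if there exists a partial embedding of the path from the root to u' in the query tree mapping u' to v', every node w on the path to a vertex in D(w), and every consecutive pair to a nonempty path in G. -/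
/-- The top-down pruning sets U, defined by: U(root) = D(root), and for a child u' of u,
U(u') = { v' ∈ D(u') : some v ∈ U(u) reaches v' by a nonempty path }. -/
inductive Upred {Vq V : Type} (child : Vq → Vq → Prop) (D : Vq → Set V)
    (reach : V → V → Prop) (r : Vq) : Vq → V → Prop
  | base : ∀ v, v ∈ D r → Upred child D reach r r v
  | step : ∀ u u' v v', child u u' → Upred child D reach r u v → v' ∈ D u' →
      reach v v' → Upred child D reach r u' v'

/-! A derivation of `Upred` is a root-to-`u'` embedding read backwards, each `step` appending one
pair. Conversely, once the `D`-condition is folded into the chain relation, membership in `U`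
propagates down any embedding from its root pair. -/

namespace Upred

variable {Vq V : Type} {child : Vq → Vq → Prop} {D : Vq → Set V} {reach : V → V → Prop} {r : Vq}

theorem exists_isChain {u : Vq} {v : V} (h : Upred child D reach r u v) :
    ∃ l : List (Vq × V),
      (∃ v0, l.head? = some (r, v0)) ∧
      l.getLast? = some (u, v) ∧
      (∀ x ∈ l, x.2 ∈ D x.1) ∧
      l.IsChain (fun a b => child a.1 b.1 ∧ reach a.2 b.2) := by
  induction h with
  | base v hv => exact ⟨[(r, v)], ⟨v, rfl⟩, rfl, by simpa using hv, List.isChain_singleton _⟩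
  | step u u' v v' hchild _ hD hreach ih =>
    obtain ⟨l, ⟨v0, hhead⟩, hlast, hmem, hchain⟩ := ih
    have hne : l ≠ [] := by rintro rfl; simp at hhead
    refine ⟨l ++ [(u', v')], ⟨v0, by rwa [List.head?_append_of_ne_nil _ hne]⟩, by simp,
      ?_, ?_⟩
    · simp only [List.mem_append, List.mem_singleton]
      rintro x (hx | rfl)
      exacts [hmem x hx, hD]
    · refine List.isChain_append.2 ⟨hchain, List.isChain_singleton _, ?_⟩
      simp only [hlast, Option.mem_def, Option.some.injEq, List.head?_cons]
      rintro _ rfl _ rfl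
      exact ⟨hchild, hreach⟩

theorem of_mem_isChain {l : List (Vq × V)} {v0 : V} (hhead : l.head? = some (r, v0))
    (hmem : ∀ x ∈ l, x.2 ∈ D x.1)
    (hchain : l.IsChain (fun a b => child a.1 b.1 ∧ reach a.2 b.2)) :
    ∀ x ∈ l, Upred child D reach r x.1 x.2 := by
  have hchain' : l.IsChain (fun a b => child a.1 b.1 ∧ reach a.2 b.2 ∧ b.2 ∈ D b.1) :=
    hchain.imp_of_mem_imp fun _ b _ hb hab => ⟨hab.1, hab.2, hmem b hb⟩
  refine hchain'.induction _ _ (fun x y hxy hx => step x.1 y.1 x.2 y.2 hxy.1 hx hxy.2.2 hxy.2.1) ?_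
  intro hne
  rw [List.head?_eq_some_head hne, Option.some.injEq] at hhead
  have hroot := hmem _ (List.head_mem hne)
  rw [hhead] at hroot ⊢
  exact base v0 hroot

end Upred

/-- Soundness of the two-phase pruning: v' ∈ U(u') iff there is a partial embedding of
the path from the root r to u' in the query tree mapping u' to v', every node w on the
path to a vertex of D(w), and every consecutive pair to a nonempty path in G. -/
theorem stmt16 {Vq V : Type} (child : Vq → Vq → Prop) (D : Vq → Set V)
    (edge : V → V → Prop) (r : Vq) (u' : Vq) (v' : V) :
    Upred child D (Relation.TransGen edge) r u' v' ↔
      ∃ l : List (Vq × V),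
        (∃ v0, l.head? = some (r, v0)) ∧
        l.getLast? = some (u', v') ∧
        (∀ x ∈ l, x.2 ∈ D x.1) ∧
        List.Chain' (fun a b => child a.1 b.1 ∧ Relation.TransGen edge a.2 b.2) l := by
  refine ⟨Upred.exists_isChain, ?_⟩
  rintro ⟨l, ⟨v0, hhead⟩, hlast, hmem, hchain⟩
  exact Upred.of_mem_isChain hhead hmem hchain _ (List.mem_of_getLast? hlast)
end

section
/- Reduction of SAT to query satisfiability: given any propositional formula φ over variables x₁,…,xₙ, construct the star query Q_φ with a root and n leaf children, where leaf i carries the always-true predicate and the root's structural predicate is φ with xᵢ replaced by the variable p_i meaning 'the root's image has a descendant matching leaf i'. Then Q_φ is satisfiable (has a nonempty answer on some data graph) if and only if φ is satisfiable: for any satisfying assignment σ of φ, the data graph consisting of one root vertex with an outgoing edge to a fresh vertex for each i with σ(xᵢ) = true yields a match, and conversely any match induces a satisfying assignment of φ. -/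
/-- Propositional formulas with negation. -/
inductive PForm (α : Type) : Type
  | var : α → PForm α
  | not : PForm α → PForm α
  | and : PForm α → PForm α → PForm α
  | or : PForm α → PForm α → PForm α

def PForm.holds {α : Type} (σ : α → Prop) : PForm α → Prop
  | .var a => σ a
  | .not f => ¬ f.holds σ
  | .and f g => f.holds σ ∧ g.holds σ
  | .or f g => f.holds σ ∨ g.holds σ

/-- Reduction of SAT to query satisfiability: the star query Q_φ — whose root's
structural predicate is φ with xᵢ meaning "the root's image has a strict descendant
matching leaf i" — is satisfiable on some (labeled) data graph iff φ is satisfiable. -/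
theorem stmt19 (n : ℕ) (φ : PForm (Fin n)) :
    (∃ (V : Type) (edge : V → V → Prop) (lab : V → Option (Fin n)) (v : V),
        PForm.holds (fun i => ∃ v', Relation.TransGen edge v v' ∧ lab v' = some i) φ)
      ↔ ∃ σ : Fin n → Prop, PForm.holds σ φ := by
  constructor
  · rintro ⟨V, edge, lab, v, h⟩
    exact ⟨_, h⟩
  · rintro ⟨σ, h⟩
    refine ⟨Option (Fin n),
      (fun a b => a = none ∧ ∃ j, b = some j ∧ σ j),
      id, none, ?_⟩
    have key : ∀ i : Fin n,
        (∃ v', Relation.TransGen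
          (fun a b : Option (Fin n) => a = none ∧ ∃ j, b = some j ∧ σ j) none v'
          ∧ id v' = some i) ↔ σ i := by
      intro i
      constructor
      · rintro ⟨v', htg, hv'⟩
        have hlast : ∃ j, v' = some j ∧ σ j := by
          cases htg with
          | single hs => exact hs.2
          | tail _ hs => exact hs.2
        obtain ⟨j, rfl, hσ⟩ := hlast
        simp only [id] at hv'
        obtain rfl : j = i := by injection hv'
        exact hσ
      · intro hσ
        exact ⟨some i, Relation.TransGen.single ⟨rfl, i, rfl, hσ⟩, rfl⟩
    -- transfer holds along pointwise iff
    have congr : ∀ (ψ : PForm (Fin n)) (σ₁ σ₂ : Fin n → Prop),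
        (∀ i, σ₁ i ↔ σ₂ i) → PForm.holds σ₁ ψ → PForm.holds σ₂ ψ := by
      intro ψ
      induction ψ with
      | var a => intro σ₁ σ₂ hiff h; exact (hiff a).mp h
      | not f ih =>
        intro σ₁ σ₂ hiff h hc
        exact h (ih σ₂ σ₁ (fun i => (hiff i).symm) hc)
      | and f g ihf ihg =>
        intro σ₁ σ₂ hiff h
        exact ⟨ihf σ₁ σ₂ hiff h.1, ihg σ₁ σ₂ hiff h.2⟩
      | or f g ihf ihg =>
        intro σ₁ σ₂ hiff h
        exact h.elim (fun h => Or.inl (ihf σ₁ σ₂ hiff h))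
          (fun h => Or.inr (ihg σ₁ σ₂ hiff h))
    exact congr φ σ _ (fun i => (key i).symm) h
end
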